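/- (Lemma 2, composition of blindness under global POVMs.) Fix d ≥ 1 and L ≥ 1, and for each l : Fin L let ρ_l : ZMod 8 → Matrix (Fin d) (Fin d) ℂ be a family of positive semidefinite matrices. Assume that for each l each single system is blind: for every POVM Π : Fin m → Matrix (Fin d) (Fin d) ℂ, every θ, φ : ZMod 8 and every i with nonzero denominator, [Σ_{r : ZMod 2} Tr(Π i · ρ_l(φ−θ−4r))] / [Σ_{θ'} Σ_r Tr(Π i · ρ_l(φ−θ'−4r))] = 1/8. Then the joint system is blind: for every POVM Π : Fin m → Matrix ((Fin L → Fin d)) ((Fin L → Fin d)) ℂ on the tensor-product space, every θ, φ : Fin L → ZMod 8 and every j with nonzero denominator, [Σ_{r : Fin L → ZMod 2} Tr(Π j · ⊗_{l} ρ_l(φ l − θ l − 4·(r l)))] / [Σ_{θ' : Fin L → ZMod 8} Σ_{r} Tr(Π j · ⊗_{l} ρ_l(φ l − θ' l − 4·(r l)))] = 1/8^L. -/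

import Mathlib

/-!
Write `σ_l(u) = ∑_r ρ_l(φ_l - u - 4r)` and `G θ = Tr (Π_j ⊗_l σ_l(θ_l))`, so that the numerator is
`G θ` and the denominator is `∑_θ' G θ'`; it suffices that `G` is constant. Changing one
coordinate `θ_{l₀}` only changes the factor in slot `l₀`. With the other factors `N_l` frozen,
`M ↦ Tr (Π_i (⋯ ⊗ M ⊗ ⋯))` is `M ↦ Tr (A_i M)` for positive operators `A_i` summing to
`(∏_{l ≠ l₀} Tr N_l) • 1`. After rescaling they form a POVM on site `l₀` (or `A_j = 0` if the
scale vanishes), and single-site blindness makes `Tr (A_j σ_{l₀}(u))` independent of `u`.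
-/

open Matrix
open scoped ComplexOrder

noncomputable section

/-- `4·r`: the map `ZMod 2 → ZMod 8` sending `0 ↦ 0`, `1 ↦ 4` -/
def pad (r : ZMod 2) : ZMod 8 := 4 * (r.val : ZMod 8)

/-- tensor product of a family of `d × d` matrices: the matrix indexed by functions
`x y : Fin L → Fin d` with entries `∏ l, M l (x l) (y l)` -/
def tensorPow {d L : ℕ} (M : Fin L → Matrix (Fin d) (Fin d) ℂ) :
    Matrix (Fin L → Fin d) (Fin L → Fin d) ℂ :=
  Matrix.of fun x y => ∏ l, M l (x l) (y l)

open Function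

section tensorPow

variable {d L : ℕ}

theorem tensorPow_update_apply [DecidableEq (Fin L)] (N : Fin L → Matrix (Fin d) (Fin d) ℂ)
    (l₀ : Fin L) (M : Matrix (Fin d) (Fin d) ℂ) (x y : Fin L → Fin d) :
    tensorPow (update N l₀ M) x y
      = M (x l₀) (y l₀) * ∏ l ∈ Finset.univ.erase l₀, N l (x l) (y l) := by
  rw [tensorPow, of_apply, ← Finset.mul_prod_erase _ _ (Finset.mem_univ l₀), update_self]
  congr 1
  exact Finset.prod_congr rfl fun l hl => by rw [update_of_ne (Finset.ne_of_mem_erase hl)]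

variable (d L) in
def tensorPowMultilinear :
    MultilinearMap ℂ (fun _ : Fin L => Matrix (Fin d) (Fin d) ℂ)
      (Matrix (Fin L → Fin d) (Fin L → Fin d) ℂ) where
  toFun := tensorPow
  map_update_add' N l M M' := by
    ext x y
    simp only [Matrix.add_apply, tensorPow_update_apply, add_mul]
  map_update_smul' N l c M := by
    ext x y
    simp only [Matrix.smul_apply, tensorPow_update_apply, smul_eq_mul, mul_assoc]

theorem sum_tensorPow {ι : Type*} [Fintype ι] (f : Fin L → ι → Matrix (Fin d) (Fin d) ℂ) :
    ∑ r : Fin L → ι, tensorPow (fun l => f l (r l)) = tensorPow (fun l => ∑ s, f l s) :=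
  ((tensorPowMultilinear d L).map_sum f).symm

theorem tensorPow_mul_tensorPow (A B : Fin L → Matrix (Fin d) (Fin d) ℂ) :
    tensorPow A * tensorPow B = tensorPow (fun l => A l * B l) := by
  ext x y
  simp only [tensorPow, mul_apply, of_apply, Fintype.prod_sum, Finset.prod_mul_distrib]

theorem conjTranspose_tensorPow (A : Fin L → Matrix (Fin d) (Fin d) ℂ) :
    (tensorPow A)ᴴ = tensorPow (fun l => (A l)ᴴ) := by
  ext x y
  simp [tensorPow, conjTranspose_apply, star_prod]

theorem trace_tensorPow (A : Fin L → Matrix (Fin d) (Fin d) ℂ) :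
    (tensorPow A).trace = ∏ l, (A l).trace := by
  simp only [Matrix.trace, diag, tensorPow, of_apply, Fintype.prod_sum]

open scoped MatrixOrder in
theorem posSemidef_tensorPow {A : Fin L → Matrix (Fin d) (Fin d) ℂ}
    (hA : ∀ l, (A l).PosSemidef) : (tensorPow A).PosSemidef := by
  choose B hB using fun l => CStarAlgebra.nonneg_iff_eq_star_mul_self.mp (hA l).nonneg
  simp only [star_eq_conjTranspose] at hB
  rw [funext hB, ← tensorPow_mul_tensorPow, ← conjTranspose_tensorPow]
  exact posSemidef_conjTranspose_mul_self _

end tensorPow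

open scoped MatrixOrder in
theorem Matrix.PosSemidef.trace_mul_nonneg {𝕜 n : Type*} [RCLike 𝕜] [Fintype n] [DecidableEq n]
    {A B : Matrix n n 𝕜} (hA : A.PosSemidef) (hB : B.PosSemidef) : 0 ≤ (A * B).trace := by
  obtain ⟨C, rfl⟩ := CStarAlgebra.nonneg_iff_eq_star_mul_self.mp hB.nonneg
  rw [star_eq_conjTranspose, ← Matrix.mul_assoc, trace_mul_cycle]
  exact (hA.mul_mul_conjTranspose_same C).trace_nonneg

section reducedOp

variable {d L : ℕ}

/-- The operator on site `l₀` representing, through the trace pairing, the linear functional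
`M ↦ Tr (P · (N₁ ⊗ ⋯ ⊗ M ⊗ ⋯ ⊗ N_L))` with `M` in slot `l₀`. -/
def reducedOp (P : Matrix (Fin L → Fin d) (Fin L → Fin d) ℂ) (N : Fin L → Matrix (Fin d) (Fin d) ℂ)
    (l₀ : Fin L) : Matrix (Fin d) (Fin d) ℂ :=
  of fun a b => (P * tensorPow (update N l₀ (single b a 1))).trace

theorem trace_reducedOp_mul (P : Matrix (Fin L → Fin d) (Fin L → Fin d) ℂ)
    (N : Fin L → Matrix (Fin d) (Fin d) ℂ) (l₀ : Fin L) (M : Matrix (Fin d) (Fin d) ℂ) :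
    (reducedOp P N l₀ * M).trace = (P * tensorPow (update N l₀ M)).trace := by
  let f : Matrix (Fin d) (Fin d) ℂ →ₗ[ℂ] ℂ :=
    traceLinearMap _ ℂ ℂ ∘ₗ LinearMap.mulLeft ℂ P ∘ₗ (tensorPowMultilinear d L).toLinearMap N l₀
  have hf : ∀ M, f M = (P * tensorPow (update N l₀ M)).trace := fun _ => rfl
  have hM : M = ∑ b, ∑ a, M b a • single b a 1 := by
    simpa only [smul_single, smul_eq_mul, mul_one] using matrix_eq_sum_single M
  calc (reducedOp P N l₀ * M).trace = ∑ a, ∑ b, M b a • f (single b a 1) := by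
        simp only [trace, diag, mul_apply, reducedOp, of_apply, hf, smul_eq_mul, mul_comm]
    _ = f M := by
        conv_rhs => rw [hM]
        simp only [map_sum, map_smul]
        exact Finset.sum_comm

theorem reducedOp_sum {m : ℕ} (P : Fin m → Matrix (Fin L → Fin d) (Fin L → Fin d) ℂ)
    (N : Fin L → Matrix (Fin d) (Fin d) ℂ) (l₀ : Fin L) :
    reducedOp (∑ i, P i) N l₀ = ∑ i, reducedOp (P i) N l₀ := by
  ext a b
  simp only [reducedOp, of_apply, Matrix.sum_apply, Finset.sum_mul, trace_sum]

theorem reducedOp_one (N : Fin L → Matrix (Fin d) (Fin d) ℂ) (l₀ : Fin L) :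
    reducedOp 1 N l₀ = (∏ l ∈ Finset.univ.erase l₀, (N l).trace) • 1 := by
  ext a b
  rw [reducedOp, of_apply, Matrix.one_mul, trace_tensorPow,
    ← Finset.mul_prod_erase _ _ (Finset.mem_univ l₀), update_self,
    Finset.prod_congr rfl fun l hl => by rw [update_of_ne (Finset.ne_of_mem_erase hl)]]
  obtain rfl | hab := eq_or_ne a b
  · simp
  · simp [hab.symm, one_apply_ne hab]

theorem posSemidef_reducedOp {P : Matrix (Fin L → Fin d) (Fin L → Fin d) ℂ} (hP : P.PosSemidef)
    {N : Fin L → Matrix (Fin d) (Fin d) ℂ} (hN : ∀ l, (N l).PosSemidef) (l₀ : Fin L) :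
    (reducedOp P N l₀).PosSemidef := by
  have hupdate : ∀ {M : Matrix (Fin d) (Fin d) ℂ}, M.PosSemidef →
      ∀ l, (update N l₀ M l).PosSemidef := fun hM l => by
    obtain rfl | hl := eq_or_ne l l₀
    · simpa using hM
    · simpa [hl] using hN l
  refine .of_dotProduct_mulVec_nonneg ?_ fun c => ?_
  · ext a b
    have hconj : ∀ l, (update N l₀ (single a b 1) l)ᴴ = update N l₀ (single b a 1) l := by
      intro l
      obtain rfl | hl := eq_or_ne l l₀
      · simp [conjTranspose_single]
      · simp [hl, (hN l).isHermitian.eq]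
    rw [conjTranspose_apply, reducedOp, of_apply, of_apply, ← trace_conjTranspose,
      conjTranspose_mul, hP.isHermitian.eq, conjTranspose_tensorPow, funext hconj, trace_mul_comm]
  · have hc : star c ⬝ᵥ reducedOp P N l₀ *ᵥ c = (reducedOp P N l₀ * vecMulVec c (star c)).trace := by
      simp only [dotProduct, mulVec, trace, diag, mul_apply, vecMulVec_apply, Pi.star_apply,
        Finset.mul_sum]
      exact Finset.sum_congr rfl fun a _ => Finset.sum_congr rfl fun b _ => by ring
    rw [hc, trace_reducedOp_mul]
    exact hP.trace_mul_nonneg (posSemidef_tensorPow (hupdate (posSemidef_vecMulVec_self_star c)))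

end reducedOp

def IsBlind {n : Type*} [Fintype n] [DecidableEq n] (ρ : ZMod 8 → Matrix n n ℂ) : Prop :=
  ∀ (m : ℕ) (Pov : Fin m → Matrix n n ℂ),
    (∀ i, (Pov i).PosSemidef) → (∑ i, Pov i) = 1 →
    ∀ (θ φ : ZMod 8) (i : Fin m),
      (∑ θ' : ZMod 8, ∑ r : ZMod 2, (Pov i * ρ (φ - θ' - pad r)).trace) ≠ 0 →
      (∑ r : ZMod 2, (Pov i * ρ (φ - θ - pad r)).trace) /
        (∑ θ' : ZMod 8, ∑ r : ZMod 2, (Pov i * ρ (φ - θ' - pad r)).trace) = 1 / 8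

theorem IsBlind.sum_trace_mul_eq {n : Type*} [Fintype n] [DecidableEq n]
    {ρ : ZMod 8 → Matrix n n ℂ} (hb : IsBlind ρ) (hρ : ∀ k, (ρ k).PosSemidef) {m : ℕ}
    {Pov : Fin m → Matrix n n ℂ} (hpos : ∀ i, (Pov i).PosSemidef) (hsum : ∑ i, Pov i = 1)
    (φ : ZMod 8) (i : Fin m) (θ θ' : ZMod 8) :
    ∑ r : ZMod 2, (Pov i * ρ (φ - θ - pad r)).trace
      = ∑ r : ZMod 2, (Pov i * ρ (φ - θ' - pad r)).trace := by
  set g : ZMod 8 → ℂ := fun u => ∑ r : ZMod 2, (Pov i * ρ (φ - u - pad r)).trace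
  change g θ = g θ'
  by_cases hden : ∑ u, g u = 0
  · have hg := (Finset.sum_eq_zero_iff_of_nonneg fun u _ =>
      Finset.sum_nonneg fun r _ => (hpos i).trace_mul_nonneg (hρ _)).mp hden
    exact (hg θ (Finset.mem_univ _)).trans (hg θ' (Finset.mem_univ _)).symm
  · have hposterior : ∀ u, g u = (∑ u, g u) / 8 := fun u =>
      ((div_eq_iff hden).mp (hb m Pov hpos hsum u φ i hden)).trans (one_div_mul_eq_div _ _)
    rw [hposterior θ, hposterior θ']

open scoped MatrixOrder in
theorem IsBlind.trace_mul_tensorPow_update_eq {d L : ℕ} {ρ : ZMod 8 → Matrix (Fin d) (Fin d) ℂ}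
    (hb : IsBlind ρ) (hρ : ∀ k, (ρ k).PosSemidef) {m : ℕ}
    {Pov : Fin m → Matrix (Fin L → Fin d) (Fin L → Fin d) ℂ} (hpos : ∀ i, (Pov i).PosSemidef)
    (hsum : ∑ i, Pov i = 1) {N : Fin L → Matrix (Fin d) (Fin d) ℂ} (hN : ∀ l, (N l).PosSemidef)
    (l₀ : Fin L) (φ : ZMod 8) (j : Fin m) (θ θ' : ZMod 8) :
    (Pov j * tensorPow (update N l₀ (∑ r : ZMod 2, ρ (φ - θ - pad r)))).trace
      = (Pov j * tensorPow (update N l₀ (∑ r : ZMod 2, ρ (φ - θ' - pad r)))).trace := by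
  simp only [← trace_reducedOp_mul, Matrix.mul_sum, trace_sum]
  set T := ∏ l ∈ Finset.univ.erase l₀, (N l).trace
  have hsumOp : ∑ i, reducedOp (Pov i) N l₀ = T • 1 := by
    rw [← reducedOp_sum, hsum, reducedOp_one]
  by_cases hT : T = 0
  · have hzero : reducedOp (Pov j) N l₀ = 0 :=
      (Finset.sum_eq_zero_iff_of_nonneg fun i _ => (posSemidef_reducedOp (hpos i) hN l₀).nonneg).mp
        (by rw [hsumOp, hT, zero_smul]) j (Finset.mem_univ j)
    simp [hzero]
  · have hT₀ : 0 ≤ T⁻¹ := inv_nonneg_of_nonneg (Finset.prod_nonneg fun l _ => (hN l).trace_nonneg)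
    have hblind := hb.sum_trace_mul_eq hρ (Pov := fun i => T⁻¹ • reducedOp (Pov i) N l₀)
      (fun i => (posSemidef_reducedOp (hpos i) hN l₀).smul hT₀)
      (by rw [← Finset.smul_sum, hsumOp, smul_smul, inv_mul_cancel₀ hT, one_smul]) φ j θ θ'
    simp only [smul_mul_assoc, trace_smul, smul_eq_mul, ← Finset.mul_sum] at hblind
    exact mul_left_cancel₀ (inv_ne_zero hT) hblind

theorem eq_of_forall_update_eq {ι α β : Type*} [Fintype ι] [DecidableEq ι] {G : (ι → α) → β}
    (hG : ∀ x i a, G (update x i a) = G x) (x y : ι → α) : G x = G y := by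
  suffices ∀ s : Finset ι, ∀ x, (∀ i ∉ s, x i = y i) → G x = G y from
    this Finset.univ x fun i hi => absurd (Finset.mem_univ i) hi
  intro s
  induction s using Finset.induction_on with
  | empty => exact fun x hx => congrArg G (funext fun i => hx i (Finset.notMem_empty i))
  | insert i s hi ih =>
    intro x hx
    rw [← hG x i (y i)]
    refine ih _ fun k hk => ?_
    obtain rfl | hki := eq_or_ne k i
    · exact update_self ..
    · rw [update_of_ne hki]
      exact hx k (by simp [hki, hk])

theorem statement5_general (d L : ℕ)
    (ρ : Fin L → ZMod 8 → Matrix (Fin d) (Fin d) ℂ)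
    (hρ : ∀ l k, (ρ l k).PosSemidef)
    (hblind : ∀ (l : Fin L) (m : ℕ) (Pov : Fin m → Matrix (Fin d) (Fin d) ℂ),
      (∀ i, (Pov i).PosSemidef) → (∑ i, Pov i) = 1 →
      ∀ (θ φ : ZMod 8) (i : Fin m),
        (∑ θ' : ZMod 8, ∑ r : ZMod 2, (Pov i * ρ l (φ - θ' - pad r)).trace) ≠ 0 →
        (∑ r : ZMod 2, (Pov i * ρ l (φ - θ - pad r)).trace) /
          (∑ θ' : ZMod 8, ∑ r : ZMod 2, (Pov i * ρ l (φ - θ' - pad r)).trace) = 1 / 8)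
    (m : ℕ) (Pov : Fin m → Matrix (Fin L → Fin d) (Fin L → Fin d) ℂ)
    (hpos : ∀ j, (Pov j).PosSemidef) (hsum : (∑ j, Pov j) = 1)
    (θ φ : Fin L → ZMod 8) (j : Fin m)
    (hden : (∑ θ' : Fin L → ZMod 8, ∑ r : Fin L → ZMod 2,
        (Pov j * tensorPow fun l => ρ l (φ l - θ' l - pad (r l))).trace) ≠ 0) :
    (∑ r : Fin L → ZMod 2, (Pov j * tensorPow fun l => ρ l (φ l - θ l - pad (r l))).trace) /
      (∑ θ' : Fin L → ZMod 8, ∑ r : Fin L → ZMod 2,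
        (Pov j * tensorPow fun l => ρ l (φ l - θ' l - pad (r l))).trace) = 1 / 8 ^ L := by
  set σ : Fin L → ZMod 8 → Matrix (Fin d) (Fin d) ℂ := fun l u => ∑ r, ρ l (φ l - u - pad r)
  set G : (Fin L → ZMod 8) → ℂ := fun θ' => (Pov j * tensorPow fun l => σ l (θ' l)).trace
  have hnum : ∀ θ', ∑ r : Fin L → ZMod 2,
      (Pov j * tensorPow fun l => ρ l (φ l - θ' l - pad (r l))).trace = G θ' := fun θ' => by
    rw [← trace_sum, ← Matrix.mul_sum, sum_tensorPow fun l s => ρ l (φ l - θ' l - pad s)]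
  have hconst : ∀ θ', G θ' = G θ := by
    refine fun θ' => eq_of_forall_update_eq (fun θ₁ l₀ t => ?_) θ' θ
    simp only [G, apply_update (fun l => σ l)]
    conv_rhs => rw [← update_eq_self l₀ (fun l => σ l (θ₁ l))]
    exact IsBlind.trace_mul_tensorPow_update_eq (hblind l₀) (hρ l₀) hpos hsum
      (fun l => posSemidef_sum _ fun r _ => hρ l _) l₀ (φ l₀) j t (θ₁ l₀)
  have hdenG : (∑ θ' : Fin L → ZMod 8, ∑ r : Fin L → ZMod 2,
      (Pov j * tensorPow fun l => ρ l (φ l - θ' l - pad (r l))).trace) = 8 ^ L * G θ := by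
    simp [hnum, hconst]
  rw [hdenG] at hden ⊢
  rw [hnum, div_mul_cancel_right₀ (right_ne_zero_of_mul hden), one_div]

/-- **Lemma 2, composition of blindness under global POVMs.** If each single
system `ρ_l` is blind for every local POVM, then the joint system `⊗_l ρ_l` is blind for every
global POVM, with posterior `1/8^L`. -/
theorem statement5 (d L : ℕ) (hd : 1 ≤ d) (hL : 1 ≤ L)
    (ρ : Fin L → ZMod 8 → Matrix (Fin d) (Fin d) ℂ)
    (hρ : ∀ l k, (ρ l k).PosSemidef)
    (hblind : ∀ (l : Fin L) (m : ℕ) (Pov : Fin m → Matrix (Fin d) (Fin d) ℂ),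
      (∀ i, (Pov i).PosSemidef) → (∑ i, Pov i) = 1 →
      ∀ (θ φ : ZMod 8) (i : Fin m),
        (∑ θ' : ZMod 8, ∑ r : ZMod 2, (Pov i * ρ l (φ - θ' - pad r)).trace) ≠ 0 →
        (∑ r : ZMod 2, (Pov i * ρ l (φ - θ - pad r)).trace) /
          (∑ θ' : ZMod 8, ∑ r : ZMod 2, (Pov i * ρ l (φ - θ' - pad r)).trace) = 1 / 8)
    (m : ℕ) (Pov : Fin m → Matrix (Fin L → Fin d) (Fin L → Fin d) ℂ)
    (hpos : ∀ j, (Pov j).PosSemidef) (hsum : (∑ j, Pov j) = 1)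
    (θ φ : Fin L → ZMod 8) (j : Fin m)
    (hden : (∑ θ' : Fin L → ZMod 8, ∑ r : Fin L → ZMod 2,
        (Pov j * tensorPow fun l => ρ l (φ l - θ' l - pad (r l))).trace) ≠ 0) :
    (∑ r : Fin L → ZMod 2, (Pov j * tensorPow fun l => ρ l (φ l - θ l - pad (r l))).trace) /
      (∑ θ' : Fin L → ZMod 8, ∑ r : Fin L → ZMod 2,
        (Pov j * tensorPow fun l => ρ l (φ l - θ' l - pad (r l))).trace) = 1 / 8 ^ L :=
  statement5_general d L ρ hρ hblind m Pov hpos hsum θ φ j hden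

end
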